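/- For all natural numbers n ≥ 2 and 1 ≤ j ≤ n, and every complex number t with |t| = 1/2 such that r n t + 2t · r (n−1) t ≠ 0 and r n t − r (n−1) t ≠ 0, the squared modulus |r (n−j) t / (r n t + 2t · r (n−1) t)|², viewed as a complex number, equals (−1)^j · 2^j · t^j · (r (n−j) t)² / ((r n t + 2t · r (n−1) t) · (r n t − r (n−1) t)). (This expresses |g_j^{(n)}(t)|² on the circle |t| = 1/2 as a rational function of t, using that t̄ = 1/(4t) there.) -/

import Mathlib

/-!
On `|t| = 1/2` we have `conj t = 1 / (4t)`. Whenever `4ts = 1`, the recursion for `r` yields the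
reciprocity `(-2t)^k r_{k+1}(s) = r_{k+1}(t)`, and with it
`(-2t)^k (r_{k+1}(s) + 2s r_k(s)) = r_{k+1}(t) - r_k(t)`. Applied with `s = conj t`, this
expresses the conjugates of numerator and denominator of `g_j^{(n)}(t)` through values at `t`, and
`|g|² = g · conj g` becomes the stated rational function.
-/

open Polynomial

/-- The polynomials `r k ∈ ℤ[X]` defined by `r 0 = 0`, `r 1 = 1`,
`r (k+2) = (1 - 2X) r (k+1) + X r k`. -/
noncomputable def r : ℕ → Polynomial ℤ
  | 0 => 0
  | 1 => 1
  | (k + 2) => (1 - 2 * X) * r (k + 1) + X * r k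

section CommRing

variable {R : Type*} [CommRing R]

lemma aeval_r_add_two (x : R) (k : ℕ) :
    aeval x (r (k + 2)) = (1 - 2 * x) * aeval x (r (k + 1)) + x * aeval x (r k) := by
  simp only [r, map_add, map_mul, map_one, map_sub, aeval_X, map_ofNat]

lemma neg_two_mul_pow_mul_aeval_r_succ {t s : R} (hts : 4 * t * s = 1) (k : ℕ) :
    (-2 * t) ^ k * aeval s (r (k + 1)) = aeval t (r (k + 1)) := by
  induction k using Nat.twoStepInduction with
  | zero => simp [r]
  | one =>
    simp only [r, map_sub, map_one, map_mul, map_ofNat, aeval_X, mul_zero, add_zero]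
    linear_combination hts
  | more k ih₁ ih₂ =>
    rw [aeval_r_add_two s (k + 1), aeval_r_add_two t (k + 1), ← ih₁, ← ih₂]
    linear_combination (-2 * t) ^ k * (t * aeval s (r (k + 1)) - 2 * t * aeval s (r (k + 2))) * hts

lemma neg_two_mul_pow_mul_aeval_r_succ_add {t s : R} (hts : 4 * t * s = 1) (k : ℕ) :
    (-2 * t) ^ k * (aeval s (r (k + 1)) + 2 * s * aeval s (r k)) =
      aeval t (r (k + 1)) - aeval t (r k) := by
  cases k with
  | zero => simp [r]
  | succ k =>
    rw [← neg_two_mul_pow_mul_aeval_r_succ hts (k + 1), ← neg_two_mul_pow_mul_aeval_r_succ hts k]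
    linear_combination -(-2 * t) ^ k * aeval s (r (k + 1)) * hts

end CommRing

lemma Complex.conj_aeval (t : ℂ) (p : ℤ[X]) :
    starRingEnd ℂ (aeval t p) = aeval (starRingEnd ℂ t) p :=
  (aeval_algHom_apply (starRingEnd ℂ).toIntAlgHom t p).symm

theorem sq_abs_g_eq_general (n j : ℕ) (t : ℂ)
    (ht : ‖t‖ = 1 / 2) :
    ((‖Polynomial.aeval t (r (n - j)) /
        (Polynomial.aeval t (r n) + 2 * t * Polynomial.aeval t (r (n - 1)))‖ ^ 2 : ℝ) : ℂ) =
      (-1) ^ j * 2 ^ j * t ^ j * (Polynomial.aeval t (r (n - j))) ^ 2 /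
        ((Polynomial.aeval t (r n) + 2 * t * Polynomial.aeval t (r (n - 1))) *
          (Polynomial.aeval t (r n) - Polynomial.aeval t (r (n - 1)))) := by
  set s := starRingEnd ℂ t
  have hts : 4 * t * s = 1 := by
    rw [mul_assoc, Complex.mul_conj, Complex.normSq_eq_norm_sq, ht]; norm_num
  have hc : -2 * t ≠ 0 := by
    intro h
    exact one_ne_zero (by linear_combination -hts - 2 * s * h : (1 : ℂ) = 0)
  rw [Complex.sq_norm, ← Complex.mul_conj, map_div₀, map_add, map_mul, map_mul, Complex.conj_aeval,
    Complex.conj_aeval, Complex.conj_aeval, Complex.conj_ofNat]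
  rcases hnj : n - j with _ | m
  · simp [r]
  obtain rfl : n = m + j + 1 := by omega
  have hnum : aeval s (r (m + 1)) = aeval t (r (m + 1)) / (-2 * t) ^ m :=
    eq_div_of_mul_eq (pow_ne_zero _ hc)
      ((mul_comm _ _).trans (neg_two_mul_pow_mul_aeval_r_succ hts m))
  have hden : aeval s (r (m + j + 1)) + 2 * s * aeval s (r (m + j)) =
      (aeval t (r (m + j + 1)) - aeval t (r (m + j))) / (-2 * t) ^ (m + j) :=
    eq_div_of_mul_eq (pow_ne_zero _ hc)
      ((mul_comm _ _).trans (neg_two_mul_pow_mul_aeval_r_succ_add hts (m + j)))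
  simp only [add_tsub_cancel_right]
  have hsign : (-1 : ℂ) ^ j * 2 ^ j * t ^ j = (-2 * t) ^ j := by
    rw [← mul_pow, ← mul_pow]; norm_num
  rw [hnum, hden, hsign, pow_add]
  generalize -2 * t = c at hc ⊢
  -- `0⁻¹ = 0` makes the identity hold even when the denominators vanish, once written with `⁻¹`.
  simp only [div_eq_mul_inv, mul_inv, inv_inv]
  field_simp

/-- On the circle `|t| = 1/2`, the squared modulus of
`g_j^{(n)}(t) = r_{n-j}(t) / (r_n(t) + 2t r_{n-1}(t))` equals the rational function
`(-1)^j 2^j t^j r_{n-j}(t)² / ((r_n(t) + 2t r_{n-1}(t))(r_n(t) - r_{n-1}(t)))`. -/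
theorem sq_abs_g_eq (n j : ℕ) (hn : 2 ≤ n) (hj : 1 ≤ j) (hjn : j ≤ n) (t : ℂ)
    (ht : ‖t‖ = 1 / 2)
    (h1 : Polynomial.aeval t (r n) + 2 * t * Polynomial.aeval t (r (n - 1)) ≠ 0)
    (h2 : Polynomial.aeval t (r n) - Polynomial.aeval t (r (n - 1)) ≠ 0) :
    ((‖Polynomial.aeval t (r (n - j)) /
        (Polynomial.aeval t (r n) + 2 * t * Polynomial.aeval t (r (n - 1)))‖ ^ 2 : ℝ) : ℂ) =
      (-1) ^ j * 2 ^ j * t ^ j * (Polynomial.aeval t (r (n - j))) ^ 2 /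
        ((Polynomial.aeval t (r n) + 2 * t * Polynomial.aeval t (r (n - 1))) *
          (Polynomial.aeval t (r n) - Polynomial.aeval t (r (n - 1)))) :=
  sq_abs_g_eq_general n j t ht
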